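/- arXiv:1809.04769 — 2 statements merged into one kernel-verified Lean document; each statement's English description precedes it below -/
import Mathlib

section
/- For the direct product G = K_{n1} × K_{n2} × K_{n3} of three complete graphs with 2 ≤ n1 ≤ n2 ≤ n3, the irredundance number satisfies ir(G) = 4. -/
open SimpleGraph

def unitaryCayley (n : ℕ) : SimpleGraph (ZMod n) where
  Adj a b := a ≠ b ∧ IsUnit (a - b)
  symm := by
    constructor
    rintro a b ⟨h1, h2⟩
    refine ⟨h1.symm, ?_⟩
    rw [← neg_sub]
    exact h2.neg
  loopless := by constructor; rintro a ⟨h, _⟩; exact h rfl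

def tensorProd {α β : Type*} (G : SimpleGraph α) (H : SimpleGraph β) :
    SimpleGraph (α × β) where
  Adj x y := G.Adj x.1 y.1 ∧ H.Adj x.2 y.2
  symm := by constructor; rintro x y ⟨h1, h2⟩; exact ⟨h1.symm, h2.symm⟩
  loopless := by constructor; rintro x ⟨h, _⟩; exact G.loopless.irrefl _ h

def tensorPi {ι : Type*} {α : ι → Type*} (G : ∀ i, SimpleGraph (α i)) :
    SimpleGraph (∀ i, α i) where
  Adj x y := x ≠ y ∧ ∀ i, (G i).Adj (x i) (y i)
  symm := by constructor; rintro x y ⟨h1, h2⟩; exact ⟨h1.symm, fun i => (h2 i).symm⟩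
  loopless := by constructor; rintro x ⟨h, _⟩; exact h rfl

/-- The balanced complete multipartite graph `K[a,b]`: `b` parts of size `a`. -/
def multipartite (a b : ℕ) : SimpleGraph (Fin a × Fin b) where
  Adj x y := x.2 ≠ y.2
  symm := by constructor; rintro x y h; exact h.symm
  loopless := by constructor; rintro x h; exact h rfl

def prodComplete2 (n1 n2 : ℕ) : SimpleGraph (Fin n1 × Fin n2) :=
  tensorProd (completeGraph (Fin n1)) (completeGraph (Fin n2))

def prodComplete3 (n1 n2 n3 : ℕ) : SimpleGraph (Fin n1 × Fin n2 × Fin n3) :=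
  tensorProd (completeGraph (Fin n1)) (prodComplete2 n2 n3)

def prodCompletePi (t : ℕ) (n : Fin t → ℕ) : SimpleGraph (∀ i, Fin (n i)) :=
  tensorPi fun i => completeGraph (Fin (n i))

def prodMultipartite (t : ℕ) (a b : Fin t → ℕ) :
    SimpleGraph (∀ i, Fin (a i) × Fin (b i)) :=
  tensorPi fun i => multipartite (a i) (b i)

def IsDominating {V : Type*} (G : SimpleGraph V) (S : Set V) : Prop :=
  ∀ v, v ∈ S ∨ ∃ u ∈ S, G.Adj u v

def IsTotalDominating {V : Type*} (G : SimpleGraph V) (S : Set V) : Prop :=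
  ∀ v, ∃ u ∈ S, G.Adj u v

def IsIndep {V : Type*} (G : SimpleGraph V) (S : Set V) : Prop :=
  ∀ u ∈ S, ∀ v ∈ S, ¬ G.Adj u v

def closedNbhd {V : Type*} (G : SimpleGraph V) (v : V) : Set V :=
  {u | u = v ∨ G.Adj v u}

def IsIrredundant {V : Type*} (G : SimpleGraph V) (S : Set V) : Prop :=
  ∀ v ∈ S, ∃ u ∈ closedNbhd G v, ∀ w ∈ S, w ≠ v → u ∉ closedNbhd G w

noncomputable def domNum {V : Type*} (G : SimpleGraph V) : ℕ :=
  sInf {k | ∃ S : Set V, IsDominating G S ∧ S.ncard = k}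

noncomputable def totalDomNum {V : Type*} (G : SimpleGraph V) : ℕ :=
  sInf {k | ∃ S : Set V, IsTotalDominating G S ∧ S.ncard = k}

noncomputable def irNum {V : Type*} (G : SimpleGraph V) : ℕ :=
  sInf {k | ∃ S : Set V, Maximal (IsIrredundant G) S ∧ S.ncard = k}

noncomputable def iNum {V : Type*} (G : SimpleGraph V) : ℕ :=
  sInf {k | ∃ S : Set V, Maximal (IsIndep G) S ∧ S.ncard = k}

noncomputable def alphaNum {V : Type*} (G : SimpleGraph V) : ℕ :=
  sSup {k | ∃ S : Set V, IsIndep G S ∧ S.ncard = k}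

noncomputable def upperDomNum {V : Type*} (G : SimpleGraph V) : ℕ :=
  sSup {k | ∃ S : Set V, Minimal (IsDominating G) S ∧ S.ncard = k}

noncomputable def IRNum {V : Type*} (G : SimpleGraph V) : ℕ :=
  sSup {k | ∃ S : Set V, IsIrredundant G S ∧ S.ncard = k}

/-- The Jacobsthal function: least `m > 0` such that any `m` consecutive integers
contain one coprime to `n`. -/
noncomputable def jacobsthal (n : ℕ) : ℕ :=
  sInf {m | 0 < m ∧ ∀ x : ℤ, ∃ i : ℕ, i < m ∧ Int.gcd (x + i) n = 1}

/-!
The four even-weight vectors of `{0, 1}³` form an independent dominating set, hence a maximal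
irredundant set, so `ir ≤ 4`. For `ir ≥ 4`, every irredundant set `S` with at most three vertices
is extended by one vertex `d`. If `S` is independent, `d` only has to share a coordinate with each
vertex of `S`. Otherwise `S` induces an edge, a path, a triangle, or an edge plus an isolated
vertex, and in each case `d` and new private neighbours are written down in coordinates, using a
value outside those of `S` in some coordinate when there is one. When there is none, the
configuration is not irredundant, or the private neighbour that `S` already has does the job.
Permuting the three coordinates reduces the symmetric cases to one another.
-/

lemma Prod.exists_ne_ne_ne {α β : Type*} [Nontrivial α] [Nontrivial β] (p q r : α × β) :
    ∃ s, s ≠ p ∧ s ≠ q ∧ s ≠ r := by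
  by_contra! h
  have h4 : 4 ≤ ENat.card (α × β) := by
    rw [ENat.card_prod]
    calc (4 : ℕ∞) = 2 * 2 := by norm_num
      _ ≤ _ := mul_le_mul' (Order.add_one_le_of_lt ENat.one_lt_card)
        (Order.add_one_le_of_lt ENat.one_lt_card)
  have h3 : ENat.card (α × β) ≤ 3 := by
    rw [← Set.encard_univ, show (Set.univ : Set (α × β)) = {p, q, r} by
      ext s
      simp only [Set.mem_univ, Set.mem_insert_iff, Set.mem_singleton_iff, true_iff]
      tauto]
    exact (Set.encard_insert_le _ _).trans
      (by grw [Set.encard_insert_le, Set.encard_singleton]; rfl)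
  exact absurd (h4.trans h3) (by decide)

namespace Set

variable {V : Type*} {S : Set V} {a b : V}

lemma exists_eq_triple_of_mem_of_mem (ha : a ∈ S) (hb : b ∈ S) (hab : a ≠ b)
    (h3 : S.encard ≤ 3) : ∃ c, S = {a, b, c} := by
  have hsub : {a, b} ⊆ S := insert_subset ha (singleton_subset_iff.mpr hb)
  have h1 : (S \ {a, b}).encard ≤ 1 := by
    rw [← encard_sdiff_add_encard_of_subset hsub, encard_pair hab,
      show (3 : ℕ∞) = 1 + 2 from rfl] at h3
    exact (ENat.add_le_add_iff_right (by decide)).mp h3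
  rcases encard_le_one_iff_eq.mp h1 with h | ⟨c, hc⟩
  · refine ⟨b, ?_⟩
    rw [← union_sdiff_cancel hsub, h, union_empty, pair_eq_singleton]
  · refine ⟨c, ?_⟩
    rw [← union_sdiff_cancel hsub, hc, insert_union, singleton_union]

lemma exists_eq_triple_of_mem (ha : a ∈ S) (h3 : S.encard ≤ 3) : ∃ b c, S = {a, b, c} := by
  by_cases hS : ∃ b ∈ S, b ≠ a
  · obtain ⟨b, hb, hba⟩ := hS
    obtain ⟨c, rfl⟩ := exists_eq_triple_of_mem_of_mem ha hb hba.symm h3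
    exact ⟨b, c, rfl⟩
  · push Not at hS
    exact ⟨a, a, by simpa using eq_singleton_iff_unique_mem.mpr ⟨ha, hS⟩⟩

end Set

section Irredundance

variable {V : Type*} {G : SimpleGraph V}

def IsIrredundantExtendable (G : SimpleGraph V) (S : Set V) : Prop :=
  ∃ d ∉ S, IsIrredundant G (insert d S)

lemma IsIndep.isIrredundant {S : Set V} (hS : IsIndep G S) : IsIrredundant G S := by
  refine fun v hv => ⟨v, Or.inl rfl, fun w hw hwv hvw => ?_⟩
  rcases hvw with rfl | hadj
  exacts [hwv rfl, hS w hw v hv hadj]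

lemma IsIndep.insert {S : Set V} {d : V} (hS : IsIndep G S)
    (hd : ∀ v ∈ S, d ∉ closedNbhd G v) : IsIndep G (insert d S) := by
  have hd' : ∀ v ∈ S, ¬ G.Adj v d := fun v hv h => hd v hv (Or.inr h)
  rintro u (rfl | hu) v (rfl | hv)
  exacts [G.loopless.irrefl _, fun h => hd' v hv h.symm, hd' u hu, hS u hu v hv]

lemma isIrredundant_insert {S : Set V} {d : V} (hd : ∀ v ∈ S, d ∉ closedNbhd G v)
    (hS : ∀ v ∈ S, ∃ u ∈ closedNbhd G v, u ∉ closedNbhd G d ∧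
      ∀ w ∈ S, w ≠ v → u ∉ closedNbhd G w) :
    IsIrredundant G (insert d S) := by
  rintro v (rfl | hv)
  · refine ⟨v, Or.inl rfl, ?_⟩
    rintro w (rfl | hw) hwv
    exacts [(hwv rfl).elim, hd w hw]
  · obtain ⟨u, hu, hud, huS⟩ := hS v hv
    refine ⟨u, hu, ?_⟩
    rintro w (rfl | hw) hwv
    exacts [hud, huS w hw hwv]

lemma isIrredundantExtendable_pair_of_private {a b d ua ub : V}
    (hua : ua ∈ closedNbhd G a) (hub : ub ∈ closedNbhd G b)
    (hua_b : ua ∉ closedNbhd G b) (hua_d : ua ∉ closedNbhd G d)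
    (hub_a : ub ∉ closedNbhd G a) (hub_d : ub ∉ closedNbhd G d)
    (hda : d ∉ closedNbhd G a) (hdb : d ∉ closedNbhd G b) :
    IsIrredundantExtendable G {a, b} := by
  refine ⟨d, ?_, isIrredundant_insert ?_ ?_⟩
  · rintro (rfl | rfl)
    exacts [hda (Or.inl rfl), hdb (Or.inl rfl)]
  · rintro v (rfl | rfl)
    exacts [hda, hdb]
  · rintro v (rfl | rfl)
    · exact ⟨ua, hua, hua_d, by rintro w (rfl | rfl) hw; exacts [(hw rfl).elim, hua_b]⟩
    · exact ⟨ub, hub, hub_d, by rintro w (rfl | rfl) hw; exacts [hub_a, (hw rfl).elim]⟩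

lemma isIrredundantExtendable_triple_of_private {a b c d ua ub uc : V}
    (hua : ua ∈ closedNbhd G a) (hub : ub ∈ closedNbhd G b) (huc : uc ∈ closedNbhd G c)
    (hua_b : ua ∉ closedNbhd G b) (hua_c : ua ∉ closedNbhd G c) (hua_d : ua ∉ closedNbhd G d)
    (hub_a : ub ∉ closedNbhd G a) (hub_c : ub ∉ closedNbhd G c) (hub_d : ub ∉ closedNbhd G d)
    (huc_a : uc ∉ closedNbhd G a) (huc_b : uc ∉ closedNbhd G b) (huc_d : uc ∉ closedNbhd G d)
    (hda : d ∉ closedNbhd G a) (hdb : d ∉ closedNbhd G b) (hdc : d ∉ closedNbhd G c) :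
    IsIrredundantExtendable G {a, b, c} := by
  refine ⟨d, ?_, isIrredundant_insert ?_ ?_⟩
  · rintro (rfl | rfl | rfl)
    exacts [hda (Or.inl rfl), hdb (Or.inl rfl), hdc (Or.inl rfl)]
  · rintro v (rfl | rfl | rfl)
    exacts [hda, hdb, hdc]
  · rintro v (rfl | rfl | rfl)
    · refine ⟨ua, hua, hua_d, ?_⟩
      rintro w (rfl | rfl | rfl) hw
      exacts [(hw rfl).elim, hua_b, hua_c]
    · refine ⟨ub, hub, hub_d, ?_⟩
      rintro w (rfl | rfl | rfl) hw
      exacts [hub_a, (hw rfl).elim, hub_c]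
    · refine ⟨uc, huc, huc_d, ?_⟩
      rintro w (rfl | rfl | rfl) hw
      exacts [huc_a, huc_b, (hw rfl).elim]

lemma Maximal.not_isIrredundantExtendable {S : Set V} (hS : Maximal (IsIrredundant G) S) :
    ¬ IsIrredundantExtendable G S :=
  fun ⟨d, hd, hdS⟩ => hd (hS.2 hdS (Set.subset_insert d S) (Set.mem_insert d S))

lemma maximal_isIrredundant_of_isIndep_of_isDominating {S : Set V} (hi : IsIndep G S)
    (hd : IsDominating G S) : Maximal (IsIrredundant G) S := by
  refine ⟨hi.isIrredundant, fun T hT hST t ht => ?_⟩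
  by_contra htS
  obtain ⟨u, -, hu⟩ := hT t ht
  rcases hd u with huS | ⟨s, hs, hsu⟩
  · exact hu u (hST huS) (fun h => htS (h ▸ huS)) (Or.inl rfl)
  · exact hu s (hST hs) (fun h => htS (h ▸ hs)) (Or.inr hsu)

lemma irNum_eq {S : Set V} {k : ℕ} (hS : Maximal (IsIrredundant G) S) (hk : S.ncard = k)
    (hle : ∀ T, Maximal (IsIrredundant G) T → k ≤ T.ncard) : irNum G = k :=
  IsLeast.csInf_eq ⟨⟨S, hS, hk⟩, fun _ ⟨T, hT, hTk⟩ => hTk ▸ hle T hT⟩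

end Irredundance

/-- Coordinates presenting `G` as the direct product `K_α × K_β × K_γ`. -/
structure ProdCoords {V : Type*} (G : SimpleGraph V) (α β γ : Type*) where
  c₁ : V → α
  c₂ : V → β
  c₃ : V → γ
  point : α → β → γ → V
  adj_iff : ∀ u v, G.Adj u v ↔ c₁ u ≠ c₁ v ∧ c₂ u ≠ c₂ v ∧ c₃ u ≠ c₃ v
  c₁_point : ∀ x y z, c₁ (point x y z) = x
  c₂_point : ∀ x y z, c₂ (point x y z) = y
  c₃_point : ∀ x y z, c₃ (point x y z) = z
  ext : ∀ u v, c₁ u = c₁ v → c₂ u = c₂ v → c₃ u = c₃ v → u = v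

namespace ProdCoords

variable {V α β γ : Type*} {G : SimpleGraph V}

attribute [simp, grind =] c₁_point c₂_point c₃_point

abbrev swap₁₂ (C : ProdCoords G α β γ) : ProdCoords G β α γ where
  c₁ := C.c₂
  c₂ := C.c₁
  c₃ := C.c₃
  point y x z := C.point x y z
  adj_iff u v := by rw [C.adj_iff]; tauto
  c₁_point _ _ _ := C.c₂_point ..
  c₂_point _ _ _ := C.c₁_point ..
  c₃_point _ _ _ := C.c₃_point ..
  ext u v h₂ h₁ h₃ := C.ext u v h₁ h₂ h₃

abbrev swap₁₃ (C : ProdCoords G α β γ) : ProdCoords G γ β α where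
  c₁ := C.c₃
  c₂ := C.c₂
  c₃ := C.c₁
  point z y x := C.point x y z
  adj_iff u v := by rw [C.adj_iff]; tauto
  c₁_point _ _ _ := C.c₃_point ..
  c₂_point _ _ _ := C.c₂_point ..
  c₃_point _ _ _ := C.c₁_point ..
  ext u v h₃ h₂ h₁ := C.ext u v h₁ h₂ h₃

abbrev swap₂₃ (C : ProdCoords G α β γ) : ProdCoords G α γ β where
  c₁ := C.c₁
  c₂ := C.c₃
  c₃ := C.c₂
  point x z y := C.point x y z
  adj_iff u v := by rw [C.adj_iff]; tauto
  c₁_point _ _ _ := C.c₁_point ..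
  c₂_point _ _ _ := C.c₃_point ..
  c₃_point _ _ _ := C.c₂_point ..
  ext u v h₁ h₃ h₂ := C.ext u v h₁ h₂ h₃

lemma eq_point_iff (C : ProdCoords G α β γ) {v : V} {x : α} {y : β} {z : γ} :
    v = C.point x y z ↔ C.c₁ v = x ∧ C.c₂ v = y ∧ C.c₃ v = z :=
  ⟨by rintro rfl; simp, fun ⟨h₁, h₂, h₃⟩ => C.ext _ _ (by simpa) (by simpa) (by simpa)⟩

lemma mem_closedNbhd_iff (C : ProdCoords G α β γ) {u v : V} : u ∈ closedNbhd G v ↔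
    (C.c₁ u = C.c₁ v ∧ C.c₂ u = C.c₂ v ∧ C.c₃ u = C.c₃ v) ∨
      (C.c₁ v ≠ C.c₁ u ∧ C.c₂ v ≠ C.c₂ u ∧ C.c₃ v ≠ C.c₃ u) :=
  or_congr ⟨fun h => by simp [h], fun ⟨h₁, h₂, h₃⟩ => C.ext u v h₁ h₂ h₃⟩ (C.adj_iff v u)

lemma exists_notMem_closedNbhd_of_c₁_eq [Nontrivial β] [Nontrivial γ] (C : ProdCoords G α β γ)
    {a b c : V} (hb : C.c₁ b = C.c₁ a) (hc : C.c₁ c = C.c₁ a) :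
    ∃ d, d ∉ closedNbhd G a ∧ d ∉ closedNbhd G b ∧ d ∉ closedNbhd G c := by
  obtain ⟨⟨y, z⟩, ha', hb', hc'⟩ :=
    Prod.exists_ne_ne_ne (C.c₂ a, C.c₃ a) (C.c₂ b, C.c₃ b) (C.c₂ c, C.c₃ c)
  exact ⟨C.point (C.c₁ a) y z, by grind [C.mem_closedNbhd_iff]⟩

lemma exists_notMem_closedNbhd_of_c₁_eq_of_c₂_eq [Nontrivial γ] (C : ProdCoords G α β γ)
    {a b c : V} (hb₁ : C.c₁ b = C.c₁ a) (hc₂ : C.c₂ c = C.c₂ a) (hb₂ : C.c₂ b ≠ C.c₂ a)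
    (hc₁ : C.c₁ c ≠ C.c₁ a) :
    ∃ d, d ∉ closedNbhd G a ∧ d ∉ closedNbhd G b ∧ d ∉ closedNbhd G c := by
  obtain ⟨z, hz⟩ := exists_ne (C.c₃ a)
  exact ⟨C.point (C.c₁ a) (C.c₂ a) z, by grind [C.mem_closedNbhd_iff]⟩

lemma exists_notMem_closedNbhd_triple [Nontrivial α] [Nontrivial β] [Nontrivial γ]
    (C : ProdCoords G α β γ) {a b c : V} (hab : ¬ G.Adj a b) (hac : ¬ G.Adj a c) :
    ∃ d, d ∉ closedNbhd G a ∧ d ∉ closedNbhd G b ∧ d ∉ closedNbhd G c := by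
  by_cases h₁ : C.c₁ b = C.c₁ a ∧ C.c₁ c = C.c₁ a
  · exact C.exists_notMem_closedNbhd_of_c₁_eq h₁.1 h₁.2
  by_cases h₂ : C.c₂ b = C.c₂ a ∧ C.c₂ c = C.c₂ a
  · exact C.swap₁₂.exists_notMem_closedNbhd_of_c₁_eq h₂.1 h₂.2
  by_cases h₃ : C.c₃ b = C.c₃ a ∧ C.c₃ c = C.c₃ a
  · exact C.swap₁₃.exists_notMem_closedNbhd_of_c₁_eq h₃.1 h₃.2
  simp only [C.adj_iff, not_and_or, not_not] at hab hac
  rcases hab with i | i | i <;> rcases hac with j | j | j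
  · grind
  · exact C.exists_notMem_closedNbhd_of_c₁_eq_of_c₂_eq i.symm j.symm (by grind) (by grind)
  · exact C.swap₂₃.exists_notMem_closedNbhd_of_c₁_eq_of_c₂_eq i.symm j.symm (by grind) (by grind)
  · exact C.swap₁₂.exists_notMem_closedNbhd_of_c₁_eq_of_c₂_eq i.symm j.symm (by grind) (by grind)
  · grind
  · exact C.swap₁₂.swap₂₃.exists_notMem_closedNbhd_of_c₁_eq_of_c₂_eq i.symm j.symm (by grind)
      (by grind)
  · exact C.swap₁₃.swap₂₃.exists_notMem_closedNbhd_of_c₁_eq_of_c₂_eq i.symm j.symm (by grind)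
      (by grind)
  · exact C.swap₁₃.exists_notMem_closedNbhd_of_c₁_eq_of_c₂_eq i.symm j.symm (by grind) (by grind)
  · grind

lemma isIrredundantExtendable_of_isIndep [Nontrivial α] [Nontrivial β] [Nontrivial γ]
    (C : ProdCoords G α β γ) {S : Set V} (hS : IsIndep G S) (h3 : S.encard ≤ 3) :
    IsIrredundantExtendable G S := by
  suffices ∃ d, ∀ v ∈ S, d ∉ closedNbhd G v by
    obtain ⟨d, hd⟩ := this
    exact ⟨d, fun h => hd d h (Or.inl rfl), (hS.insert hd).isIrredundant⟩
  obtain rfl | ⟨a, ha⟩ := S.eq_empty_or_nonempty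
  · exact ⟨C.point (Classical.arbitrary α) (Classical.arbitrary β) (Classical.arbitrary γ),
      by simp⟩
  obtain ⟨b, c, rfl⟩ := Set.exists_eq_triple_of_mem ha h3
  obtain ⟨d, hd⟩ := C.exists_notMem_closedNbhd_triple (hS a (by simp) b (by simp))
    (hS a (by simp) c (by simp))
  exact ⟨d, by simpa using hd⟩

lemma isIrredundantExtendable_pair_of_exists_ne₃ (C : ProdCoords G α β γ) {a b : V}
    (hab : G.Adj a b) (hw : ∃ w, w ≠ C.c₃ a ∧ w ≠ C.c₃ b) :
    IsIrredundantExtendable G {a, b} := by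
  obtain ⟨w, hwa, hwb⟩ := hw
  apply isIrredundantExtendable_pair_of_private (d := C.point (C.c₁ a) (C.c₂ b) w)
    (ua := C.point (C.c₁ b) (C.c₂ b) w) (ub := C.point (C.c₁ a) (C.c₂ a) w) <;>
  grind [C.mem_closedNbhd_iff, C.adj_iff]

lemma closedNbhd_subset_of_adj (C : ProdCoords G α β γ) {a b : V} (hab : G.Adj a b)
    (h₁ : ∀ x, x = C.c₁ a ∨ x = C.c₁ b) (h₂ : ∀ y, y = C.c₂ a ∨ y = C.c₂ b)
    (h₃ : ∀ z, z = C.c₃ a ∨ z = C.c₃ b) : closedNbhd G a ⊆ closedNbhd G b := by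
  rintro u (rfl | hau)
  · exact Or.inr hab.symm
  · rw [C.adj_iff] at hau
    exact Or.inl (C.ext _ _ ((h₁ _).resolve_left hau.1.symm) ((h₂ _).resolve_left hau.2.1.symm)
      ((h₃ _).resolve_left hau.2.2.symm))

lemma isIrredundantExtendable_pair_of_adj (C : ProdCoords G α β γ) {a b : V}
    (hS : IsIrredundant G {a, b}) (hab : G.Adj a b) : IsIrredundantExtendable G {a, b} := by
  by_cases h₃ : ∃ z, z ≠ C.c₃ a ∧ z ≠ C.c₃ b
  · exact C.isIrredundantExtendable_pair_of_exists_ne₃ hab h₃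
  by_cases h₂ : ∃ y, y ≠ C.c₂ a ∧ y ≠ C.c₂ b
  · exact C.swap₂₃.isIrredundantExtendable_pair_of_exists_ne₃ hab h₂
  by_cases h₁ : ∃ x, x ≠ C.c₁ a ∧ x ≠ C.c₁ b
  · exact C.swap₁₃.isIrredundantExtendable_pair_of_exists_ne₃ hab h₁
  simp only [not_exists, not_and_or, not_not] at h₁ h₂ h₃
  obtain ⟨u, hua, hub⟩ := hS a (by simp)
  exact absurd (C.closedNbhd_subset_of_adj hab h₁ h₂ h₃ hua) (hub b (by simp) hab.ne.symm)

lemma isIrredundantExtendable_of_triangle (C : ProdCoords G α β γ) {a b c : V}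
    (hab : G.Adj a b) (hac : G.Adj a c) (hbc : G.Adj b c) :
    IsIrredundantExtendable G {a, b, c} := by
  apply isIrredundantExtendable_triple_of_private (d := C.point (C.c₁ a) (C.c₂ b) (C.c₃ c))
    (ua := C.point (C.c₁ b) (C.c₂ c) (C.c₃ c)) (ub := C.point (C.c₁ c) (C.c₂ a) (C.c₃ c))
    (uc := C.point (C.c₁ a) (C.c₂ b) (C.c₃ a)) <;>
  grind [C.mem_closedNbhd_iff, C.adj_iff]

/-- The vertex added is `(a₁, c₂, b₃)`, and `ua` is the private neighbour that `a` keeps. -/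
lemma isIrredundantExtendable_of_path_of_private (C : ProdCoords G α β γ) {a b c ua : V}
    (hab : G.Adj a b) (hac : G.Adj a c) (h₁ : C.c₁ b = C.c₁ c) (h₂ : C.c₂ b ≠ C.c₂ c)
    (hua : ua ∈ closedNbhd G a) (hua_b : ua ∉ closedNbhd G b) (hua_c : ua ∉ closedNbhd G c)
    (hua_d : ua ∉ closedNbhd G (C.point (C.c₁ a) (C.c₂ c) (C.c₃ b))) :
    IsIrredundantExtendable G {a, b, c} := by
  apply isIrredundantExtendable_triple_of_private hua (hua_b := hua_b) (hua_c := hua_c)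
    (hua_d := hua_d) (ub := C.point (C.c₁ a) (C.c₂ c) (C.c₃ a))
    (uc := C.point (C.c₁ a) (C.c₂ b) (C.c₃ a)) <;>
  grind [C.mem_closedNbhd_iff, C.adj_iff]

lemma isIrredundantExtendable_of_path_of_c₁_eq (C : ProdCoords G α β γ) {a b c : V}
    (hS : IsIrredundant G {a, b, c}) (hab : G.Adj a b) (hac : G.Adj a c)
    (h₁ : C.c₁ b = C.c₁ c) (h₂ : C.c₂ b ≠ C.c₂ c) :
    IsIrredundantExtendable G {a, b, c} := by
  by_cases h₃ : C.c₃ b = C.c₃ c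
  swap
  · apply C.isIrredundantExtendable_of_path_of_private hab hac h₁ h₂
      (ua := C.point (C.c₁ b) (C.c₂ c) (C.c₃ b)) <;>
    grind [C.mem_closedNbhd_iff, C.adj_iff]
  by_cases hx : ∃ x, x ≠ C.c₁ a ∧ x ≠ C.c₁ b
  · obtain ⟨x, hxa, hxb⟩ := hx
    apply C.isIrredundantExtendable_of_path_of_private hab hac h₁ h₂
      (ua := C.point x (C.c₂ b) (C.c₃ b)) <;>
    grind [C.mem_closedNbhd_iff, C.adj_iff]
  by_cases hz : ∃ z, z ≠ C.c₃ a ∧ z ≠ C.c₃ b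
  · obtain ⟨z, hza, hzb⟩ := hz
    apply C.swap₁₃.isIrredundantExtendable_of_path_of_private hab hac h₃ h₂
      (ua := C.point (C.c₁ b) (C.c₂ b) z) <;>
    grind [C.mem_closedNbhd_iff, C.adj_iff]
  -- Coordinates 1 and 3 take only the values of `a` and `b`, which forces the private
  -- neighbour of `a` to be `(b₁, u₂, b₃)`.
  simp only [not_exists, not_and_or, not_not] at hx hz
  obtain ⟨u, hua, hu⟩ := hS a (by simp)
  have hub := hu b (by simp) hab.ne.symm
  have huc := hu c (by simp) hac.ne.symm
  refine C.isIrredundantExtendable_of_path_of_private hab hac h₁ h₂ hua hub huc ?_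
  have hx' := hx (C.c₁ u)
  have hz' := hz (C.c₃ u)
  grind [C.mem_closedNbhd_iff, C.adj_iff]

lemma isIrredundantExtendable_of_path (C : ProdCoords G α β γ) {a b c : V}
    (hS : IsIrredundant G {a, b, c}) (hab : G.Adj a b) (hac : G.Adj a c) (hbc : ¬ G.Adj b c)
    (hne : b ≠ c) : IsIrredundantExtendable G {a, b, c} := by
  rw [C.adj_iff] at hbc
  by_cases e₁ : C.c₁ b = C.c₁ c <;> by_cases e₂ : C.c₂ b = C.c₂ c <;>
    by_cases e₃ : C.c₃ b = C.c₃ c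
  · exact absurd (C.ext b c e₁ e₂ e₃) hne
  · exact C.swap₂₃.isIrredundantExtendable_of_path_of_c₁_eq hS hab hac e₁ e₃
  · exact C.isIrredundantExtendable_of_path_of_c₁_eq hS hab hac e₁ e₂
  · exact C.isIrredundantExtendable_of_path_of_c₁_eq hS hab hac e₁ e₂
  · exact C.swap₁₂.isIrredundantExtendable_of_path_of_c₁_eq hS hab hac e₂ e₁
  · exact C.swap₁₂.isIrredundantExtendable_of_path_of_c₁_eq hS hab hac e₂ e₁
  · exact C.swap₁₃.isIrredundantExtendable_of_path_of_c₁_eq hS hab hac e₃ e₂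
  · exact absurd ⟨e₁, e₂, e₃⟩ hbc

lemma isIrredundantExtendable_of_edge_of_exists_ne₃ [Nontrivial γ] (C : ProdCoords G α β γ)
    {a b c : V} (hab : G.Adj a b) (h₁ : C.c₁ c = C.c₁ a) (h₂ : C.c₂ c = C.c₂ b)
    (hw : ∃ w, w ≠ C.c₃ a ∧ w ≠ C.c₃ b) : IsIrredundantExtendable G {a, b, c} := by
  obtain ⟨w, hwa, hwb⟩ := hw
  obtain ⟨z, hz⟩ := exists_ne (C.c₃ c)
  apply isIrredundantExtendable_triple_of_private (d := C.point (C.c₁ a) (C.c₂ b) z)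
    (ua := C.point (C.c₁ b) (C.c₂ b) w) (ub := C.point (C.c₁ a) (C.c₂ a) w) (uc := c) <;>
  grind [C.mem_closedNbhd_iff, C.adj_iff]

lemma closedNbhd_subset_union_of_edge (C : ProdCoords G α β γ) {a b c : V} (hab : G.Adj a b)
    (h₁ : C.c₁ c = C.c₁ a) (h₂ : C.c₂ c = C.c₂ b) (h₃ : C.c₃ c = C.c₃ b)
    (hy : ∀ y, y = C.c₂ a ∨ y = C.c₂ b) (hz : ∀ z, z = C.c₃ a ∨ z = C.c₃ b) :
    closedNbhd G b ⊆ closedNbhd G a ∪ closedNbhd G c := by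
  rintro u (rfl | hbu)
  · exact Or.inl (Or.inr hab)
  have hy' := hy (C.c₂ u)
  have hz' := hz (C.c₃ u)
  simp only [Set.mem_union]
  grind [C.mem_closedNbhd_iff, C.adj_iff]

lemma isIrredundantExtendable_of_edge_of_c₃_eq (C : ProdCoords G α β γ) {a b c : V}
    (hS : IsIrredundant G {a, b, c}) (hab : G.Adj a b)
    (h₁ : C.c₁ c = C.c₁ a) (h₂ : C.c₂ c = C.c₂ b) (h₃ : C.c₃ c = C.c₃ b)
    (hz : ∀ z, z = C.c₃ a ∨ z = C.c₃ b) : IsIrredundantExtendable G {a, b, c} := by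
  by_cases hy : ∃ y, y ≠ C.c₂ a ∧ y ≠ C.c₂ b
  · obtain ⟨y, hya, hyb⟩ := hy
    apply isIrredundantExtendable_triple_of_private (d := C.point (C.c₁ a) y (C.c₃ b))
      (ua := C.point (C.c₁ b) y (C.c₃ b)) (ub := C.point (C.c₁ a) y (C.c₃ a)) (uc := c) <;>
    grind [C.mem_closedNbhd_iff, C.adj_iff]
  simp only [not_exists, not_and_or, not_not] at hy
  have hcb : c ≠ b := fun h => ((C.adj_iff a b).mp hab).1 (h ▸ h₁).symm
  obtain ⟨u, hub, hu⟩ := hS b (by simp)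
  exfalso
  rcases C.closedNbhd_subset_union_of_edge hab h₁ h₂ h₃ hy hz hub with hua | huc
  exacts [hu a (by simp) hab.ne hua, hu c (by simp) hcb huc]

lemma isIrredundantExtendable_of_edge_of_c₁_eq_of_c₂_eq [Nontrivial γ] (C : ProdCoords G α β γ)
    {a b c : V} (hS : IsIrredundant G {a, b, c}) (hab : G.Adj a b)
    (h₁ : C.c₁ c = C.c₁ a) (h₂ : C.c₂ c = C.c₂ b) : IsIrredundantExtendable G {a, b, c} := by
  by_cases hz : ∃ z, z ≠ C.c₃ a ∧ z ≠ C.c₃ b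
  · exact C.isIrredundantExtendable_of_edge_of_exists_ne₃ hab h₁ h₂ hz
  simp only [not_exists, not_and_or, not_not] at hz
  rcases hz (C.c₃ c) with h₃ | h₃
  · rw [Set.insert_comm] at hS ⊢
    exact C.swap₁₂.isIrredundantExtendable_of_edge_of_c₃_eq hS hab.symm h₂ h₁ h₃
      (fun z => (hz z).symm)
  · exact C.isIrredundantExtendable_of_edge_of_c₃_eq hS hab h₁ h₂ h₃ hz

lemma isIrredundantExtendable_of_edge [Nontrivial α] [Nontrivial β] [Nontrivial γ]
    (C : ProdCoords G α β γ) {a b c : V} (hS : IsIrredundant G {a, b, c}) (hab : G.Adj a b)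
    (hca : ¬ G.Adj c a) (hcb : ¬ G.Adj c b) : IsIrredundantExtendable G {a, b, c} := by
  have hab' := (C.adj_iff a b).mp hab
  simp only [C.adj_iff, not_and_or, not_not] at hca hcb
  rcases hca with i | i | i <;> rcases hcb with j | j | j
  · exact absurd (i.symm.trans j) hab'.1
  · exact C.isIrredundantExtendable_of_edge_of_c₁_eq_of_c₂_eq hS hab i j
  · exact C.swap₂₃.isIrredundantExtendable_of_edge_of_c₁_eq_of_c₂_eq hS hab i j
  · exact C.swap₁₂.isIrredundantExtendable_of_edge_of_c₁_eq_of_c₂_eq hS hab i j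
  · exact absurd (i.symm.trans j) hab'.2.1
  · exact C.swap₁₂.swap₂₃.isIrredundantExtendable_of_edge_of_c₁_eq_of_c₂_eq hS hab i j
  · exact C.swap₁₃.swap₂₃.isIrredundantExtendable_of_edge_of_c₁_eq_of_c₂_eq hS hab i j
  · exact C.swap₁₃.isIrredundantExtendable_of_edge_of_c₁_eq_of_c₂_eq hS hab i j
  · exact absurd (i.symm.trans j) hab'.2.2

lemma isIrredundantExtendable_of_encard_le_three [Nontrivial α] [Nontrivial β] [Nontrivial γ]
    (C : ProdCoords G α β γ) {S : Set V} (hS : IsIrredundant G S) (h3 : S.encard ≤ 3) :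
    IsIrredundantExtendable G S := by
  by_cases hind : IsIndep G S
  · exact C.isIrredundantExtendable_of_isIndep hind h3
  simp only [IsIndep, not_forall, not_not] at hind
  obtain ⟨a, ha, b, hb, hab⟩ := hind
  obtain ⟨c, rfl⟩ := Set.exists_eq_triple_of_mem_of_mem ha hb hab.ne h3
  by_cases hca : c = a
  · subst hca
    rw [Set.insert_eq_of_mem (by simp)] at hS ⊢
    exact C.isIrredundantExtendable_pair_of_adj hS hab.symm
  by_cases hcb : c = b
  · subst hcb
    rw [Set.pair_eq_singleton] at hS ⊢
    exact C.isIrredundantExtendable_pair_of_adj hS hab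
  by_cases hac : G.Adj a c <;> by_cases hbc : G.Adj b c
  · exact C.isIrredundantExtendable_of_triangle hab hac hbc
  · exact C.isIrredundantExtendable_of_path hS hab hac hbc (Ne.symm hcb)
  · rw [Set.insert_comm] at hS ⊢
    exact C.isIrredundantExtendable_of_path hS hab.symm hbc hac (Ne.symm hca)
  · exact C.isIrredundantExtendable_of_edge hS hab (fun h => hac h.symm) (fun h => hbc h.symm)

lemma four_le_encard_of_maximal [Nontrivial α] [Nontrivial β] [Nontrivial γ]
    (C : ProdCoords G α β γ) {T : Set V} (hT : Maximal (IsIrredundant G) T) : 4 ≤ T.encard := by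
  by_contra! h
  exact hT.not_isIrredundantExtendable
    (C.isIrredundantExtendable_of_encard_le_three hT.1 (Order.le_of_lt_add_one h))

/-- The even-weight vectors of `{0, 1}³`. -/
lemma exists_maximal_isIrredundant_ncard_eq_four [Nontrivial α] [Nontrivial β] [Nontrivial γ]
    (C : ProdCoords G α β γ) : ∃ S : Set V, Maximal (IsIrredundant G) S ∧ S.ncard = 4 := by
  obtain ⟨x₀, x₁, hx⟩ := exists_pair_ne α
  obtain ⟨y₀, y₁, hy⟩ := exists_pair_ne β
  obtain ⟨z₀, z₁, hz⟩ := exists_pair_ne γ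
  refine ⟨{C.point x₀ y₀ z₀, C.point x₀ y₁ z₁, C.point x₁ y₀ z₁, C.point x₁ y₁ z₀},
    maximal_isIrredundant_of_isIndep_of_isDominating ?_ ?_, ?_⟩
  · simp only [IsIndep, Set.mem_insert_iff, Set.mem_singleton_iff, forall_eq_or_imp, forall_eq]
    grind [C.adj_iff]
  · intro v
    simp only [Set.mem_insert_iff, Set.mem_singleton_iff, exists_eq_or_imp, exists_eq_left]
    grind [C.adj_iff, C.eq_point_iff]
  · rw [Set.ncard_insert_of_notMem, Set.ncard_eq_three.mpr ⟨_, _, _, ?_, ?_, ?_, rfl⟩] <;>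
    simp only [Set.mem_insert_iff, Set.mem_singleton_iff, ne_eq, C.eq_point_iff, c₁_point,
      c₂_point, c₃_point] <;> grind

lemma irNum_eq_four [Finite V] [Nontrivial α] [Nontrivial β] [Nontrivial γ]
    (C : ProdCoords G α β γ) : irNum G = 4 := by
  obtain ⟨S, hS, hS4⟩ := C.exists_maximal_isIrredundant_ncard_eq_four
  refine irNum_eq hS hS4 fun T hT => ?_
  have h4 := C.four_le_encard_of_maximal hT
  rw [← T.toFinite.cast_ncard_eq] at h4
  exact_mod_cast h4

def ofTensorProd (α β γ : Type*) :
    ProdCoords (tensorProd (completeGraph α) (tensorProd (completeGraph β) (completeGraph γ)))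
      α β γ where
  c₁ := Prod.fst
  c₂ v := v.2.1
  c₃ v := v.2.2
  point x y z := (x, y, z)
  adj_iff _ _ := Iff.rfl
  c₁_point _ _ _ := rfl
  c₂_point _ _ _ := rfl
  c₃_point _ _ _ := rfl
  ext _ _ h₁ h₂ h₃ := Prod.ext h₁ (Prod.ext h₂ h₃)

end ProdCoords

theorem stmt9 (n1 n2 n3 : ℕ) (h1 : 2 ≤ n1) (h12 : n1 ≤ n2) (h23 : n2 ≤ n3) :
    irNum (prodComplete3 n1 n2 n3) = 4 := by
  have : Nontrivial (Fin n1) := Fin.nontrivial_iff_two_le.mpr h1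
  have : Nontrivial (Fin n2) := Fin.nontrivial_iff_two_le.mpr (h1.trans h12)
  have : Nontrivial (Fin n3) := Fin.nontrivial_iff_two_le.mpr (h1.trans (h12.trans h23))
  exact (ProdCoords.ofTensorProd (Fin n1) (Fin n2) (Fin n3)).irNum_eq_four
end

section
/- For every t ≥ 3 and ε > 0, there exists a positive integer n with exactly t distinct prime factors such that i(X_n) < ε · n / p, where p is the largest prime divisor of n. -/
open SimpleGraph

/-!
Let `s < q < r` be the three largest prime factors of a squarefree `n`, chosen with `r ≤ 2q`
(Bertrand). The residues divisible by at least two of `s, q, r` form an independent set of the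
unitary Cayley graph, since two of them share one of these primes, which then divides their
difference. The set is also dominating: a residue `y` divisible by at most one of them avoids some
pair `a, b`, and the Chinese remainder theorem gives `u ≡ 0 mod ab` with `u ≡ y + 1` modulo the
remaining prime factors, so that `u - y` is a unit. Hence `i(X_n) ≤ n/(sq) + n/(sr) + n/(qr)
≤ 3n/(sq)`, which is less than `ε n / r` once `s > 6/ε`.
-/

section Domination

variable {V : Type*} {G : SimpleGraph V} {S : Set V}

lemma IsIndep.maximal_of_isDominating (hI : IsIndep G S) (hD : IsDominating G S) :
    Maximal (IsIndep G) S :=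
  ⟨hI, fun _ hT hST y hy =>
    (hD y).elim id fun ⟨u, hu, hadj⟩ => (hT u (hST hu) y hy hadj).elim⟩

lemma iNum_le_ncard (hI : IsIndep G S) (hD : IsDominating G S) : iNum G ≤ S.ncard :=
  Nat.sInf_le ⟨S, hI.maximal_of_isDominating hD, rfl⟩

end Domination

namespace ZMod

variable {n : ℕ}

lemma ncard_setOf_dvd_val_and_dvd_val_le [NeZero n] {a b : ℕ} (ha : a.Prime) (hb : b.Prime)
    (hab : a ≠ b) (han : a ∣ n) (hbn : b ∣ n) :
    {x : ZMod n | a ∣ x.val ∧ b ∣ x.val}.ncard ≤ n / (a * b) := by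
  have hcop : a.Coprime b := (Nat.coprime_primes ha hb).mpr hab
  have habn : a * b ∣ n := hcop.mul_dvd_of_dvd_of_dvd han hbn
  calc {x : ZMod n | a ∣ x.val ∧ b ∣ x.val}.ncard
      ≤ (Finset.range (n / (a * b)) : Set ℕ).ncard := by
        refine Set.ncard_le_ncard_of_injOn (fun x => x.val / (a * b)) ?_ ?_
        · intro x _
          simpa using Nat.div_lt_div_of_lt_of_dvd habn (ZMod.val_lt x)
        · intro x hx y hy hxy
          apply ZMod.val_injective n
          rw [← Nat.div_mul_cancel (hcop.mul_dvd_of_dvd_of_dvd hx.1 hx.2),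
            ← Nat.div_mul_cancel (hcop.mul_dvd_of_dvd_of_dvd hy.1 hy.2)]
          exact congrArg (· * (a * b)) hxy
    _ = n / (a * b) := by simp

lemma not_isUnit_sub_of_prime_dvd_val [NeZero n] {p : ℕ} (hp : p.Prime) (hpn : p ∣ n)
    {u v : ZMod n} (hu : p ∣ u.val) (hv : p ∣ v.val) : ¬IsUnit (u - v) := by
  have := Fact.mk hp
  intro h
  have := h.map (ZMod.castHom hpn (ZMod p))
  rw [map_sub, ZMod.castHom_apply, ZMod.castHom_apply, ZMod.cast_eq_val, ZMod.cast_eq_val,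
    (ZMod.natCast_eq_zero_iff _ _).mpr hu, (ZMod.natCast_eq_zero_iff _ _).mpr hv, sub_zero] at this
  exact not_isUnit_zero this

lemma exists_dvd_val_isUnit_sub (hn : Squarefree n) {k : ℕ} (hk : k ∣ n) (y : ZMod n)
    (hy : k.Coprime y.val) : ∃ u : ZMod n, k ∣ u.val ∧ IsUnit (u - y) := by
  obtain ⟨m, rfl⟩ := hk
  have : NeZero (k * m) := ⟨hn.ne_zero⟩
  let e := ZMod.chineseRemainder (Nat.coprime_of_squarefree_mul hn)
  have he : ∀ x, (e x).1 = (x.val : ZMod k) := fun x => by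
    show (ZMod.cast x : ZMod k × ZMod m).1 = _
    rw [ZMod.cast_eq_val, Prod.fst_natCast]
  -- In `ZMod k × ZMod m`, `u` is `(0, y + 1)`, so `u - y` is `(-y, 1)`.
  let u := e.symm (0, (e y).2 + 1)
  have hu : e u = (0, (e y).2 + 1) := e.apply_symm_apply _
  refine ⟨u, ?_, ?_⟩
  · rw [← ZMod.natCast_eq_zero_iff, ← he, hu]
  · rw [← isUnit_map_iff e, map_sub, hu, Prod.isUnit_iff]
    simp only [Prod.fst_sub, Prod.snd_sub, zero_sub, add_sub_cancel_left, isUnit_one, and_true,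
      IsUnit.neg_iff, he, ZMod.isUnit_iff_coprime]
    exact hy.symm

end ZMod

variable {n : ℕ}

lemma unitaryCayley_adj_iff [Nontrivial (ZMod n)] {a b : ZMod n} :
    (unitaryCayley n).Adj a b ↔ IsUnit (a - b) :=
  ⟨And.right, fun h => ⟨sub_ne_zero.mp h.ne_zero, h⟩⟩

lemma exists_unitaryCayley_adj_of_not_dvd_val (hn : Squarefree n) {a b : ℕ} (ha : a.Prime)
    (hb : b.Prime) (hab : a ≠ b) (han : a ∣ n) (hbn : b ∣ n) {y : ZMod n}
    (hay : ¬a ∣ y.val) (hby : ¬b ∣ y.val) :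
    ∃ u, (a ∣ u.val ∧ b ∣ u.val) ∧ (unitaryCayley n).Adj u y := by
  have : Nontrivial (ZMod n) :=
    ZMod.nontrivial_iff.mpr fun h => ha.ne_one (Nat.dvd_one.mp (h ▸ han))
  have habn : a * b ∣ n := ((Nat.coprime_primes ha hb).mpr hab).mul_dvd_of_dvd_of_dvd han hbn
  obtain ⟨u, hu, hunit⟩ := ZMod.exists_dvd_val_isUnit_sub hn habn y
    (Nat.Coprime.mul_left (ha.coprime_iff_not_dvd.mpr hay) (hb.coprime_iff_not_dvd.mpr hby))
  exact ⟨u, ⟨dvd_of_mul_right_dvd hu, dvd_of_mul_left_dvd hu⟩, unitaryCayley_adj_iff.mpr hunit⟩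

def twoOfThreeMultiples (n s q r : ℕ) : Set (ZMod n) :=
  {x | (s ∣ x.val ∧ q ∣ x.val) ∨ (s ∣ x.val ∧ r ∣ x.val) ∨ (q ∣ x.val ∧ r ∣ x.val)}

section TwoOfThree

variable {s q r : ℕ} (hs : s.Prime) (hq : q.Prime) (hr : r.Prime)
  (hsn : s ∣ n) (hqn : q ∣ n) (hrn : r ∣ n)
include hs hq hr hsn hqn hrn

lemma isIndep_twoOfThreeMultiples [NeZero n] :
    IsIndep (unitaryCayley n) (twoOfThreeMultiples n s q r) := by
  rintro u hu v hv ⟨-, huv⟩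
  have hshared :
      (s ∣ u.val ∧ s ∣ v.val) ∨ (q ∣ u.val ∧ q ∣ v.val) ∨ (r ∣ u.val ∧ r ∣ v.val) := by
    simp only [twoOfThreeMultiples, Set.mem_ofPred_eq] at hu hv
    tauto
  rcases hshared with ⟨hu, hv⟩ | ⟨hu, hv⟩ | ⟨hu, hv⟩
  · exact ZMod.not_isUnit_sub_of_prime_dvd_val hs hsn hu hv huv
  · exact ZMod.not_isUnit_sub_of_prime_dvd_val hq hqn hu hv huv
  · exact ZMod.not_isUnit_sub_of_prime_dvd_val hr hrn hu hv huv

lemma isDominating_twoOfThreeMultiples (hn : Squarefree n) (hsq : s ≠ q) (hsr : s ≠ r)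
    (hqr : q ≠ r) : IsDominating (unitaryCayley n) (twoOfThreeMultiples n s q r) := by
  intro y
  by_cases hy : y ∈ twoOfThreeMultiples n s q r
  · exact Or.inl hy
  right
  have hmissed :
      (¬s ∣ y.val ∧ ¬q ∣ y.val) ∨ (¬s ∣ y.val ∧ ¬r ∣ y.val) ∨ (¬q ∣ y.val ∧ ¬r ∣ y.val) := by
    simp only [twoOfThreeMultiples, Set.mem_ofPred_eq] at hy
    tauto
  rcases hmissed with ⟨h₁, h₂⟩ | ⟨h₁, h₂⟩ | ⟨h₁, h₂⟩
  · obtain ⟨u, hu, hadj⟩ := exists_unitaryCayley_adj_of_not_dvd_val hn hs hq hsq hsn hqn h₁ h₂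
    exact ⟨u, Or.inl hu, hadj⟩
  · obtain ⟨u, hu, hadj⟩ := exists_unitaryCayley_adj_of_not_dvd_val hn hs hr hsr hsn hrn h₁ h₂
    exact ⟨u, Or.inr (Or.inl hu), hadj⟩
  · obtain ⟨u, hu, hadj⟩ := exists_unitaryCayley_adj_of_not_dvd_val hn hq hr hqr hqn hrn h₁ h₂
    exact ⟨u, Or.inr (Or.inr hu), hadj⟩

lemma ncard_twoOfThreeMultiples_le [NeZero n] (hsq : s ≠ q) (hsr : s ≠ r) (hqr : q ≠ r) :
    (twoOfThreeMultiples n s q r).ncard ≤ n / (s * q) + n / (s * r) + n / (q * r) := by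
  rw [twoOfThreeMultiples, Set.ofPred_or, Set.ofPred_or]
  refine (Set.ncard_union_le _ _).trans ?_
  rw [add_assoc]
  gcongr
  · exact ZMod.ncard_setOf_dvd_val_and_dvd_val_le hs hq hsq hsn hqn
  refine (Set.ncard_union_le _ _).trans ?_
  gcongr
  · exact ZMod.ncard_setOf_dvd_val_and_dvd_val_le hs hr hsr hsn hrn
  · exact ZMod.ncard_setOf_dvd_val_and_dvd_val_le hq hr hqr hqn hrn

lemma iNum_unitaryCayley_le (hn : Squarefree n) (hsq : s < q) (hqr : q < r) :
    iNum (unitaryCayley n) ≤ 3 * (n / (s * q)) := by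
  have : NeZero n := ⟨hn.ne_zero⟩
  have hs₀ := hs.pos
  have hq₀ := hq.pos
  calc iNum (unitaryCayley n) ≤ (twoOfThreeMultiples n s q r).ncard :=
        iNum_le_ncard (isIndep_twoOfThreeMultiples hs hq hr hsn hqn hrn)
          (isDominating_twoOfThreeMultiples hs hq hr hsn hqn hrn hn hsq.ne
            (hsq.trans hqr).ne hqr.ne)
    _ ≤ n / (s * q) + n / (s * r) + n / (q * r) :=
        ncard_twoOfThreeMultiples_le hs hq hr hsn hqn hrn hsq.ne (hsq.trans hqr).ne hqr.ne
    _ ≤ n / (s * q) + n / (s * q) + n / (s * q) := by gcongr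
    _ = 3 * (n / (s * q)) := by ring

end TwoOfThree

lemma squarefree_prod_of_prime {P : Finset ℕ} (hP : ∀ p ∈ P, p.Prime) :
    Squarefree (∏ p ∈ P, p) :=
  Finset.squarefree_prod_of_pairwise_isCoprime
    (fun p hp q hq hpq =>
      Nat.coprime_iff_isRelPrime.mp ((Nat.coprime_primes (hP p hp) (hP q hq)).mpr hpq))
    fun p hp => (hP p hp).prime.squarefree

lemma exists_primes_with_top_three (k N : ℕ) :
    ∃ (P : Finset ℕ) (s q r : ℕ), (∀ p ∈ P, p.Prime) ∧ P.card = k + 3 ∧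
      s ∈ P ∧ q ∈ P ∧ r ∈ P ∧ (∀ p ∈ P, p ≤ r) ∧ N < s ∧ s < q ∧ q < r ∧ r ≤ 2 * q := by
  obtain ⟨F, hFp, hFc⟩ := Nat.infinite_setOfPred_prime.exists_subset_card_eq k
  obtain ⟨s, hs_gt, hs⟩ := Nat.exists_infinite_primes (max N (F.sup id) + 1)
  obtain ⟨q, hq_gt, hq⟩ := Nat.exists_infinite_primes (s + 1)
  obtain ⟨r, hr, hqr, hr2⟩ := Nat.exists_prime_lt_and_le_two_mul q hq.ne_zero
  have hF : ∀ p ∈ F, p < s := fun p hp =>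
    (Finset.le_sup (f := id) hp).trans_lt (by omega)
  refine ⟨insert r (insert q (insert s F)), s, q, r, ?_, ?_, by simp, by simp, by simp, ?_,
    by omega, by omega, hqr, hr2⟩
  · simp only [Finset.mem_insert]
    rintro p (rfl | rfl | rfl | hp)
    exacts [hr, hq, hs, hFp hp]
  · rw [Finset.card_insert_of_notMem, Finset.card_insert_of_notMem,
      Finset.card_insert_of_notMem, hFc]
    · exact fun h => (hF s h).false
    · simp only [Finset.mem_insert, not_or]
      exact ⟨by omega, fun h => by have := hF q h; omega⟩
    · simp only [Finset.mem_insert, not_or]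
      exact ⟨by omega, by omega, fun h => by have := hF r h; omega⟩
  · simp only [Finset.mem_insert]
    rintro p (rfl | rfl | rfl | hp)
    · exact le_rfl
    · exact hqr.le
    · omega
    · have := hF p hp; omega

lemma three_mul_div_mul_lt {ε n s q r : ℝ} (hn : 0 < n) (hs : 0 < s) (hq : 0 < q) (hr : 0 < r)
    (hεs : 6 < ε * s) (hrq : r ≤ 2 * q) : 3 * (n / (s * q)) < ε * n / r := by
  rw [← mul_div_assoc, div_lt_div_iff₀ (by positivity) hr]
  nlinarith [mul_lt_mul_of_pos_right hεs (mul_pos hq hn)]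

theorem stmt14 (t : ℕ) (ht : 3 ≤ t) (ε : ℝ) (hε : 0 < ε) :
    ∃ n pmax : ℕ, n.primeFactors.card = t ∧ pmax ∈ n.primeFactors ∧
      (∀ q ∈ n.primeFactors, q ≤ pmax) ∧
      (iNum (unitaryCayley n) : ℝ) < ε * n / pmax := by
  obtain ⟨P, s, q, r, hP, hcard, hsP, hqP, hrP, hmax, hs6, hsq, hqr, hr2q⟩ :=
    exists_primes_with_top_three (t - 3) ⌈6 / ε⌉₊
  have hfac : (∏ p ∈ P, p).primeFactors = P := Nat.primeFactors_prod hP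
  refine ⟨∏ p ∈ P, p, r, by rw [hfac]; omega, by rw [hfac]; exact hrP, by rw [hfac]; exact hmax, ?_⟩
  set n := ∏ p ∈ P, p
  have hsqf : Squarefree n := squarefree_prod_of_prime hP
  have hdvd : ∀ p ∈ P, p ∣ n := fun p hp => Finset.dvd_prod_of_mem _ hp
  have hi := iNum_unitaryCayley_le (hP s hsP) (hP q hqP) (hP r hrP) (hdvd s hsP) (hdvd q hqP)
    (hdvd r hrP) hsqf hsq hqr
  have hεs : 6 < ε * s := by
    rw [mul_comm, ← div_lt_iff₀ hε]
    exact Nat.lt_of_ceil_lt hs6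
  calc (iNum (unitaryCayley n) : ℝ) ≤ 3 * ((n / (s * q) : ℕ) : ℝ) := by exact_mod_cast hi
    _ ≤ 3 * (n / (s * q)) := by grw [Nat.cast_div_le, Nat.cast_mul]
    _ < ε * n / r := three_mul_div_mul_lt (by exact_mod_cast hsqf.ne_zero.bot_lt)
        (by exact_mod_cast (hP s hsP).pos) (by exact_mod_cast (hP q hqP).pos)
        (by exact_mod_cast (hP r hrP).pos) hεs (by exact_mod_cast hr2q)
end
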